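/- For every integer n ≥ 1, there exists a set X of cardinality continuum of functions [0,1] → ℝ such that: every element of X belongs to the set E_n of functions that are n times continuously differentiable on [0,1] and, in every nonempty open subinterval of [0,1], fail at some point to have an (n+1)-st derivative; and X is a set of free generators of a subalgebra of ℝ^{[0,1]} contained in E_n ∪ {0}; that is, for every m ≥ 1, all distinct G_1, …, G_m ∈ X, and every nonzero real polynomial P in m variables with zero constant term, the function x ↦ P(G_1(x), …, G_m(x)) belongs to E_n \ {0}. In other words, E_n is strongly 𝔠-algebrable. -/

import Mathlib

open Set

/-- Membership in the set `E n`: a function `[0,1] → ℝ` that is `n` times continuously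
differentiable on `[0,1]` and, in every nonempty open subinterval of `[0,1]`, fails at
some point to have an `(n+1)`-st derivative (relative to `[0,1]`). -/
def MemEn (n : ℕ) (f : ℝ → ℝ) : Prop :=
  ContDiffOn ℝ n f (Icc 0 1) ∧
  ∀ a b : ℝ, 0 ≤ a → a < b → b ≤ 1 →
    ∃ x ∈ Ioo a b,
      ¬ DifferentiableWithinAt ℝ (iteratedDerivWithin n f (Icc 0 1)) (Icc 0 1) x

/-!
Let `(q_k)` be dense in `[0, ∞)` and `f(x) = ∑ 2⁻ᵏ (x - q_k)₊^(n + 1/2) / Γ(n + 3/2)`. Then `f` is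
`Cⁿ` and strictly increasing on `[0, 1]`, and `f⁽ⁿ⁾(x) = ∑ 2⁻ᵏ (x - q_k)₊^(1/2) / Γ(3/2)` has
infinite right derivative at every `q_k`. Take `X = {exp (c f) | c ∈ B}` for a Hamel basis `B` of
`ℝ` over `ℚ`. For distinct `c_i ∈ B` and `P` without constant term,
`P(exp (c_1 f), …, exp (c_m f)) = Ψ ∘ f` with `Ψ(t) = ∑_α a_α exp (⟨α, c⟩ t)`, where the exponents
`⟨α, c⟩` are pairwise distinct and nonzero for `α ≠ 0`. By Dedekind's independence of characters
and analyticity, neither `Ψ` nor `Ψ'` vanishes identically on an interval. Finally, Faà di Bruno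
gives `(Ψ ∘ f)⁽ⁿ⁾ = Ψ'(f) f⁽ⁿ⁾ + R` with `R ∈ C¹`, so `(Ψ ∘ f)⁽ⁿ⁾` is not differentiable wherever
`f⁽ⁿ⁾` is not and `Ψ'(f) ≠ 0`; since `f` is strictly increasing, the latter holds on a
subinterval of every interval.
-/

open Filter Topology

lemma hasDerivAt_max_zero_rpow {r : ℝ} (hr : 1 < r) (t : ℝ) :
    HasDerivAt (fun t => max t 0 ^ r) (r * max t 0 ^ (r - 1)) t := by
  have hzero : ∀ s ≤ (0 : ℝ), max s 0 ^ r = 0 := fun s hs => by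
    rw [max_eq_right hs, Real.zero_rpow (by linarith)]
  have hrpow : ∀ s ≥ (0 : ℝ), max s 0 ^ r = s ^ r := fun s hs => by rw [max_eq_left hs]
  rcases lt_trichotomy t 0 with ht | rfl | ht
  · rw [max_eq_right ht.le, Real.zero_rpow (by linarith), mul_zero]
    refine (hasDerivAt_const t 0).congr_of_eventuallyEq ?_
    filter_upwards [eventually_lt_nhds ht] with s hs using hzero s hs.le
  · rw [max_self, ← hasDerivWithinAt_univ, ← Iic_union_Ici]
    have hIic : HasDerivWithinAt (fun t : ℝ => max t 0 ^ r) 0 (Iic 0) 0 :=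
      (hasDerivWithinAt_const 0 _ 0).congr (fun s hs => hzero s hs) (hzero 0 le_rfl)
    have hIci := (Real.hasDerivAt_rpow_const (x := 0) (Or.inr hr.le)).hasDerivWithinAt
      (s := Ici 0) |>.congr (fun s hs => hrpow s hs) (hrpow 0 le_rfl)
    rw [Real.zero_rpow (by linarith), mul_zero] at hIci ⊢
    exact hIic.union hIci
  · rw [max_eq_left ht.le]
    refine (Real.hasDerivAt_rpow_const (Or.inl ht.ne')).congr_of_eventuallyEq ?_
    filter_upwards [eventually_gt_nhds ht] with s hs using hrpow s hs.le

/-- The normalization by `Γ(r + 1) = r Γ(r)` makes differentiation lower the exponent by one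
without producing a constant, see `hasDerivAt_truncPow`. -/
noncomputable def truncPow (r t : ℝ) : ℝ := max t 0 ^ r / Real.Gamma (r + 1)

lemma truncPow_nonneg {r : ℝ} (hr : -1 < r) (t : ℝ) : 0 ≤ truncPow r t :=
  div_nonneg (Real.rpow_nonneg (le_max_right _ _) _) (Real.Gamma_pos_of_pos (by linarith)).le

lemma truncPow_of_nonpos {r t : ℝ} (hr : r ≠ 0) (ht : t ≤ 0) : truncPow r t = 0 := by
  simp [truncPow, max_eq_right ht, Real.zero_rpow hr]

lemma truncPow_of_nonneg {r t : ℝ} (ht : 0 ≤ t) : truncPow r t = t ^ r / Real.Gamma (r + 1) := by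
  rw [truncPow, max_eq_left ht]

lemma truncPow_pos {r t : ℝ} (hr : -1 < r) (ht : 0 < t) : 0 < truncPow r t := by
  rw [truncPow_of_nonneg ht.le]
  exact div_pos (Real.rpow_pos_of_pos ht r) (Real.Gamma_pos_of_pos (by linarith))

lemma monotone_truncPow {r : ℝ} (hr : 0 ≤ r) : Monotone (truncPow r) := fun _ _ hst =>
  div_le_div_of_nonneg_right (Real.rpow_le_rpow (le_max_right _ _) (max_le_max_right 0 hst) hr)
    (Real.Gamma_pos_of_pos (by linarith)).le

lemma continuous_truncPow {r : ℝ} (hr : 0 ≤ r) : Continuous (truncPow r) :=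
  ((continuous_id.max continuous_const).rpow_const fun _ => Or.inr hr).div_const _

lemma hasDerivAt_truncPow {r : ℝ} (hr : 1 < r) (t : ℝ) :
    HasDerivAt (truncPow r) (truncPow (r - 1) t) t := by
  refine ((hasDerivAt_max_zero_rpow hr t).div_const (Real.Gamma (r + 1))).congr_deriv ?_
  unfold truncPow
  rw [sub_add_cancel, Real.Gamma_add_one (by linarith)]
  field_simp [(Real.Gamma_pos_of_pos (by linarith : 0 < r)).ne']

lemma not_differentiableWithinAt_Ioi_of_rpow_le_sub {g : ℝ → ℝ} {x₀ c r : ℝ} (hc : 0 < c)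
    (hr : r < 1) (h : ∀ᶠ y in 𝓝[>] x₀, c * (y - x₀) ^ r ≤ g y - g x₀) :
    ¬ DifferentiableWithinAt ℝ g (Ioi x₀) x₀ := by
  intro hg
  have hslope := (hasDerivWithinAt_iff_tendsto_slope' (lt_irrefl x₀)).1 hg.hasDerivWithinAt
  have hshift : Tendsto (fun y => y - x₀) (𝓝[>] x₀) (𝓝[>] 0) := by
    refine tendsto_nhdsWithin_of_tendsto_nhds_of_eventually_within _ ?_ ?_
    · simpa using ((continuous_sub_right x₀).tendsto x₀).mono_left nhdsWithin_le_nhds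
    · filter_upwards [self_mem_nhdsWithin] with y hy using sub_pos.2 hy.out
  have hlow : Tendsto (fun y => c * (y - x₀) ^ (r - 1)) (𝓝[>] x₀) atTop :=
    ((tendsto_rpow_neg_nhdsGT_zero (by linarith)).comp hshift).const_mul_atTop hc
  refine not_tendsto_nhds_of_tendsto_atTop (tendsto_atTop_mono' _ ?_ hlow) _ hslope
  filter_upwards [h, self_mem_nhdsWithin] with y hy hy₀
  have hpos : 0 < y - x₀ := sub_pos.2 hy₀.out
  rw [slope_def_field, le_div_iff₀ hpos, mul_assoc, ← Real.rpow_add_one hpos.ne', sub_add_cancel]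
  exact hy

noncomputable def truncPowSeries (q : ℕ → ℝ) (r x : ℝ) : ℝ :=
  ∑' k, (1 / 2 : ℝ) ^ k * truncPow r (x - q k)

section TruncPowSeries

variable {q : ℕ → ℝ} {r : ℝ}

lemma norm_truncPowSeries_term_le (hq : ∀ k, 0 ≤ q k) (hr : 0 ≤ r) {x b : ℝ} (hxb : x ≤ b)
    (k : ℕ) : ‖(1 / 2 : ℝ) ^ k * truncPow r (x - q k)‖ ≤ (1 / 2 : ℝ) ^ k * truncPow r b := by
  have := truncPow_nonneg (by linarith) (x - q k) (r := r)
  rw [Real.norm_of_nonneg (by positivity)]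
  gcongr
  exact monotone_truncPow hr (by linarith [hq k])

lemma summable_truncPowSeries_terms (hq : ∀ k, 0 ≤ q k) (hr : 0 ≤ r) (x : ℝ) :
    Summable fun k => (1 / 2 : ℝ) ^ k * truncPow r (x - q k) :=
  .of_norm_bounded (summable_geometric_two.mul_right _) (norm_truncPowSeries_term_le hq hr le_rfl)

lemma hasDerivAt_truncPowSeries (hq : ∀ k, 0 ≤ q k) (hr : 1 < r) (x : ℝ) :
    HasDerivAt (truncPowSeries q r) (truncPowSeries q (r - 1) x) x := by
  have hterm : ∀ k y, HasDerivAt (fun z => (1 / 2 : ℝ) ^ k * truncPow r (z - q k))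
      ((1 / 2 : ℝ) ^ k * truncPow (r - 1) (y - q k)) y := fun k y =>
    ((hasDerivAt_truncPow hr (y - q k)).comp_sub_const y (q k)).const_mul _
  exact hasDerivAt_tsum_of_isPreconnected (summable_geometric_two.mul_right _) isOpen_Iio
    isPreconnected_Iio (fun k y _ => hterm k y)
    (fun k y hy => norm_truncPowSeries_term_le hq (by linarith) (le_of_lt hy) k)
    (lt_add_one x) (summable_truncPowSeries_terms hq (by linarith) x) (lt_add_one x)

lemma continuous_truncPowSeries (hq : ∀ k, 0 ≤ q k) (hr : 0 ≤ r) :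
    Continuous (truncPowSeries q r) := by
  refine continuous_iff_continuousAt.2 fun x => ?_
  refine (continuousOn_tsum (fun k => ?_) (summable_geometric_two.mul_right _)
    (fun k y hy => norm_truncPowSeries_term_le hq hr (le_of_lt hy) k)).continuousAt
    (Iio_mem_nhds (lt_add_one x))
  exact (continuous_const.mul ((continuous_truncPow hr).comp
    (continuous_sub_right (q k)))).continuousOn

lemma term_sub_le_truncPowSeries_sub (hq : ∀ k, 0 ≤ q k) (hr : 0 ≤ r) {x y : ℝ} (hxy : x ≤ y)
    (k : ℕ) : (1 / 2 : ℝ) ^ k * (truncPow r (y - q k) - truncPow r (x - q k)) ≤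
      truncPowSeries q r y - truncPowSeries q r x := by
  have hy := summable_truncPowSeries_terms hq hr y
  have hx := summable_truncPowSeries_terms hq hr x
  rw [truncPowSeries, truncPowSeries, ← hy.tsum_sub hx, mul_sub]
  refine (hy.sub hx).le_tsum k fun j _ => ?_
  rw [sub_nonneg]
  gcongr
  exact monotone_truncPow hr (by linarith)

lemma strictMonoOn_truncPowSeries (hq : ∀ k, 0 ≤ q k)
    (hdense : ∀ a b, 0 ≤ a → a < b → ∃ k, q k ∈ Ioo a b) (hr : 0 < r) :
    StrictMonoOn (truncPowSeries q r) (Ici 0) := by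
  intro x hx y _ hxy
  obtain ⟨k, hk⟩ := hdense x y hx hxy
  have hterm := term_sub_le_truncPowSeries_sub hq hr.le hxy.le k
  rw [truncPow_of_nonpos (t := x - q k) hr.ne' (by linarith [hk.1]), sub_zero] at hterm
  have := truncPow_pos (by linarith) (sub_pos.2 hk.2) (r := r)
  have : 0 < (1 / 2 : ℝ) ^ k * truncPow r (y - q k) := by positivity
  linarith

lemma not_differentiableWithinAt_truncPowSeries (hq : ∀ k, 0 ≤ q k) (hr₀ : 0 < r) (hr₁ : r < 1)
    (k : ℕ) : ¬ DifferentiableWithinAt ℝ (truncPowSeries q r) (Ioi (q k)) (q k) := by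
  have hΓ := Real.Gamma_pos_of_pos (by linarith : 0 < r + 1)
  refine not_differentiableWithinAt_Ioi_of_rpow_le_sub (c := (1 / 2) ^ k / Real.Gamma (r + 1))
    (by positivity) hr₁ ?_
  filter_upwards [self_mem_nhdsWithin] with y hy
  convert term_sub_le_truncPowSeries_sub hq hr₀.le (le_of_lt hy) k using 1
  rw [sub_self, truncPow_of_nonpos hr₀.ne' le_rfl,
    truncPow_of_nonneg (sub_nonneg.2 (le_of_lt hy))]
  ring

end TruncPowSeries

section DerivativeChain

variable {F : ℕ → ℝ → ℝ} {s : Set ℝ} {n : ℕ}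

lemma eqOn_iteratedDerivWithin_of_hasDerivWithinAt (hs : UniqueDiffOn ℝ s)
    (hF : ∀ j < n, ∀ x ∈ s, HasDerivWithinAt (F j) (F (j + 1) x) s x) :
    ∀ j ≤ n, EqOn (iteratedDerivWithin j (F 0) s) (F j) s := by
  intro j
  induction j with
  | zero => intro _ x _; simp
  | succ j ih =>
    intro hj x hx
    rw [iteratedDerivWithin_succ, derivWithin_congr (ih (by omega)) (ih (by omega) hx)]
    exact (hF j (by omega) x hx).derivWithin (hs x hx)

lemma contDiffOn_of_hasDerivWithinAt (hs : UniqueDiffOn ℝ s)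
    (hF : ∀ j < n, ∀ x ∈ s, HasDerivWithinAt (F j) (F (j + 1) x) s x)
    (hFn : ContinuousOn (F n) s) : ContDiffOn ℝ n (F 0) s := by
  have heq := eqOn_iteratedDerivWithin_of_hasDerivWithinAt hs hF
  have hdiff : ∀ j < n, DifferentiableOn ℝ (iteratedDerivWithin j (F 0) s) s := fun j hj x hx =>
    (hF j hj x hx).differentiableWithinAt.congr (heq j hj.le) (heq j hj.le hx)
  apply contDiffOn_of_continuousOn_differentiableOn_deriv
  · intro j hj
    rcases (show j < n ∨ j = n by exact_mod_cast hj.lt_or_eq) with hj | rfl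
    · exact (hdiff j hj).continuousOn
    · exact hFn.congr (heq j le_rfl)
  · intro j hj
    exact hdiff j (by exact_mod_cast hj)

end DerivativeChain

lemma exists_memEn_strictMonoOn (n : ℕ) : ∃ f, MemEn n f ∧ StrictMonoOn f (Icc 0 1) := by
  obtain ⟨u, hu⟩ := TopologicalSpace.exists_dense_seq ℝ
  set q : ℕ → ℝ := fun k => |u k|
  have hq : ∀ k, 0 ≤ q k := fun k => abs_nonneg _
  have hdense : ∀ a b, 0 ≤ a → a < b → ∃ k, q k ∈ Ioo a b := fun a b ha hab => by
    obtain ⟨k, hk⟩ := hu.exists_mem_open isOpen_Ioo (nonempty_Ioo.2 hab)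
    exact ⟨k, by simpa only [q, abs_of_pos (ha.trans_lt hk.1)] using hk⟩
  set F : ℕ → ℝ → ℝ := fun j => truncPowSeries q (n + 1 / 2 - j)
  have hF : ∀ j < n, ∀ x ∈ Icc (0 : ℝ) 1, HasDerivWithinAt (F j) (F (j + 1) x) (Icc 0 1) x := by
    intro j hj x _
    have hj' : (j + 1 : ℝ) ≤ n := by exact_mod_cast hj
    have h := hasDerivAt_truncPowSeries hq (r := n + 1 / 2 - j) (by linarith) x
    rw [show (n : ℝ) + 1 / 2 - j - 1 = n + 1 / 2 - (j + 1 : ℕ) by push_cast; ring] at h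
    exact h.hasDerivWithinAt
  have hFn : F n = truncPowSeries q (1 / 2) := by simp [F]
  have hU := uniqueDiffOn_Icc (zero_lt_one' ℝ)
  have hDn := eqOn_iteratedDerivWithin_of_hasDerivWithinAt hU hF n le_rfl
  have hF0 : 0 < (n : ℝ) + 1 / 2 - (0 : ℕ) := by simp only [Nat.cast_zero, sub_zero]; positivity
  refine ⟨F 0, ⟨contDiffOn_of_hasDerivWithinAt hU hF ?_, fun a b ha hab hb => ?_⟩,
    (strictMonoOn_truncPowSeries hq hdense hF0).mono Icc_subset_Ici_self⟩
  · rw [hFn]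
    exact (continuous_truncPowSeries hq (by norm_num)).continuousOn
  obtain ⟨k, hk⟩ := hdense a b ha hab
  have hk01 : q k ∈ Icc (0 : ℝ) 1 := ⟨hq k, hk.2.le.trans hb⟩
  refine ⟨q k, hk, fun hd => not_differentiableWithinAt_truncPowSeries hq (r := 1 / 2)
    (by norm_num) (by norm_num) k ?_⟩
  rw [← hFn]
  exact (hd.congr hDn.symm (hDn hk01).symm).mono_of_mem_nhdsWithin
    (ordConnected_Icc.mem_nhdsGT hk01 (right_mem_Icc.2 zero_le_one) (hk.2.trans_le hb))

section Composition

variable {f : ℝ → ℝ} {s : Set ℝ}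

lemma ContDiffOn.contDiffOn_iteratedDerivWithin (hs : UniqueDiffOn ℝ s) {m k : ℕ}
    (hf : ContDiffOn ℝ (m + k : ℕ) f s) : ContDiffOn ℝ k (iteratedDerivWithin m f s) s := by
  induction m generalizing f with
  | zero => simpa using hf
  | succ m ih =>
    rw [iteratedDerivWithin_succ']
    exact ih (hf.derivWithin hs (by push_cast; exact le_of_eq (by ring)))

/-- Faà di Bruno's formula, keeping only the term that contains the highest derivative of `f`. -/
lemma exists_iteratedDerivWithin_comp_eq_add {Ψ : ℝ → ℝ} (hs : UniqueDiffOn ℝ s) {m k : ℕ}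
    (hm : 1 ≤ m) (hΨ : ContDiff ℝ (m + k + 1 : ℕ) Ψ) (hf : ContDiffOn ℝ (m + k : ℕ) f s) :
    ∃ R : ℝ → ℝ, ContDiffOn ℝ (k + 1 : ℕ) R s ∧ EqOn (iteratedDerivWithin m (Ψ ∘ f) s)
      (fun x => deriv Ψ (f x) * iteratedDerivWithin m f s x + R x) s := by
  induction m, hm using Nat.le_induction generalizing k with
  | base =>
    refine ⟨0, contDiffOn_const, fun x hx => ?_⟩
    have hfx : DifferentiableWithinAt ℝ f s x := hf.differentiableOn (by simp) x hx
    have hΨx : DifferentiableAt ℝ Ψ (f x) := hΨ.differentiable (by simp) _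
    simp only [iteratedDerivWithin_one, Pi.zero_apply, add_zero]
    exact (hΨx.hasDerivAt.comp_hasDerivWithinAt x hfx.hasDerivWithinAt).derivWithin (hs x hx)
  | succ m _ ih =>
    have hf' : ContDiffOn ℝ (m + (k + 1) : ℕ) f s := by convert hf using 2; ring
    obtain ⟨R, hR, hReq⟩ := ih (k := k + 1) (by convert hΨ using 2; ring) hf'
    have hΨ'' : ContDiff ℝ (k + 1 : ℕ) (deriv^[2] Ψ) :=
      (hΨ.of_le (by exact_mod_cast (by omega : k + 1 + 2 ≤ m + 1 + k + 1))).iterate_deriv' _ 2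
    have hΨ' : Differentiable ℝ (deriv Ψ) :=
      ((hΨ.of_le (by exact_mod_cast (by omega : 1 + 1 ≤ m + 1 + k + 1))).iterate_deriv' 1 1
        ).differentiable one_ne_zero
    refine ⟨fun x => deriv^[2] Ψ (f x) * derivWithin f s x * iteratedDerivWithin m f s x +
      derivWithin R s x, ?_, fun x hx => ?_⟩
    · refine ((hΨ''.comp_contDiffOn (hf.of_le ?_)).mul (hf.derivWithin hs ?_)).mul
        (hf'.contDiffOn_iteratedDerivWithin hs) |>.add (hR.derivWithin hs le_rfl)
      · exact_mod_cast (by omega : k + 1 ≤ m + 1 + k)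
      · exact_mod_cast (by omega : k + 1 + 1 ≤ m + 1 + k)
    have hfx : HasDerivWithinAt f (derivWithin f s x) s x :=
      (hf.differentiableOn (by exact_mod_cast (by omega : m + 1 + k ≠ 0)) x hx).hasDerivWithinAt
    have hDm : HasDerivWithinAt (iteratedDerivWithin m f s)
        (iteratedDerivWithin (m + 1) f s x) s x := by
      rw [iteratedDerivWithin_succ]
      exact (hf.differentiableOn_iteratedDerivWithin
        (by exact_mod_cast (by omega : m < m + 1 + k)) hs x hx).hasDerivWithinAt
    have hRx : HasDerivWithinAt R (derivWithin R s x) s x :=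
      (hR.differentiableOn (by simp) x hx).hasDerivWithinAt
    have hq : HasDerivWithinAt (fun y => deriv Ψ (f y))
        (deriv^[2] Ψ (f x) * derivWithin f s x) s x :=
      (hΨ' (f x)).hasDerivAt.comp_hasDerivWithinAt x hfx
    rw [iteratedDerivWithin_succ, derivWithin_congr hReq (hReq hx),
      ((hq.fun_mul hDm).fun_add hRx).derivWithin (hs x hx)]
    ring

lemma not_differentiableWithinAt_iteratedDerivWithin_comp {Ψ : ℝ → ℝ} (hs : UniqueDiffOn ℝ s)
    {n : ℕ} (hn : 1 ≤ n) (hΨ : ContDiff ℝ (n + 1 : ℕ) Ψ) (hf : ContDiffOn ℝ n f s) {x : ℝ}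
    (hx : x ∈ s) (hΨx : deriv Ψ (f x) ≠ 0)
    (hfx : ¬ DifferentiableWithinAt ℝ (iteratedDerivWithin n f s) s x) :
    ¬ DifferentiableWithinAt ℝ (iteratedDerivWithin n (Ψ ∘ f) s) s x := by
  obtain ⟨R, hR, hEq⟩ := exists_iteratedDerivWithin_comp_eq_add (k := 0) hs hn hΨ hf
  intro hD
  have hΨ' : Differentiable ℝ (deriv Ψ) :=
    ((hΨ.of_le (by exact_mod_cast (by omega : 1 + 1 ≤ n + 1))).iterate_deriv' 1 1).differentiable
      one_ne_zero
  have hq : DifferentiableWithinAt ℝ (fun y => deriv Ψ (f y)) s x :=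
    (hΨ' (f x)).comp_differentiableWithinAt x
      (hf.differentiableOn (by exact_mod_cast (by omega : n ≠ 0)) x hx)
  -- On `s`, `f⁽ⁿ⁾ = ((Ψ ∘ f)⁽ⁿ⁾ - R) / (Ψ' ∘ f)` wherever the denominator does not vanish.
  refine hfx (((hD.sub (hR.differentiableOn (by simp) x hx)).div hq hΨx)
    |>.congr_of_eventuallyEq_of_mem ?_ hx)
  filter_upwards [self_mem_nhdsWithin, hq.continuousWithinAt.eventually (eventually_ne_nhds hΨx)]
    with y hy hqy
  rw [Pi.div_apply, Pi.sub_apply, hEq hy]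
  field_simp
  ring

lemma MemEn.exists_mem_not_differentiableWithinAt {n : ℕ} (hf : MemEn n f) {U : Set ℝ}
    (hU : IsOpen U) (hne : U.Nonempty) (hsub : U ⊆ Icc 0 1) :
    ∃ x ∈ U, ¬ DifferentiableWithinAt ℝ (iteratedDerivWithin n f (Icc 0 1)) (Icc 0 1) x := by
  obtain ⟨x, hx⟩ := hne
  obtain ⟨l, u, ⟨hlx, hxu⟩, hlu⟩ := mem_nhds_iff_exists_Ioo_subset.1 (hU.mem_nhds hx)
  have hx01 := hsub hx
  obtain ⟨y, hy, hfy⟩ := hf.2 (max l 0) (min u 1) (le_max_right _ _)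
    (max_lt (lt_min (hlx.trans hxu) (hlx.trans_le hx01.2)) (lt_min (hx01.1.trans_lt hxu) one_pos))
    (min_le_right _ _)
  exact ⟨y, hlu ⟨(le_max_left _ _).trans_lt hy.1, hy.2.trans_le (min_le_left _ _)⟩, hfy⟩

lemma MemEn.comp {n : ℕ} (hn : 1 ≤ n) {Ψ : ℝ → ℝ} (hΨ : ContDiff ℝ (n + 1 : ℕ) Ψ)
    (hΨ' : ∀ u v, u < v → ∃ t ∈ Ioo u v, deriv Ψ t ≠ 0) (hf : MemEn n f)
    (hmono : StrictMonoOn f (Icc 0 1)) : MemEn n (Ψ ∘ f) := by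
  refine ⟨(hΨ.of_le (by exact_mod_cast (by omega : n ≤ n + 1))).comp_contDiffOn hf.1,
    fun a b ha hab hb => ?_⟩
  have hab01 : Icc a b ⊆ Icc 0 1 := Icc_subset_Icc ha hb
  obtain ⟨t, ht, hΨt⟩ := hΨ' (f a) (f b)
    (hmono (hab01 (left_mem_Icc.2 hab.le)) (hab01 (right_mem_Icc.2 hab.le)) hab)
  obtain ⟨x₁, hx₁, rfl⟩ := intermediate_value_Ioo hab.le (hf.1.continuousOn.mono hab01) ht
  have hU : IsOpen (Ioo a b ∩ (fun x => deriv Ψ (f x)) ⁻¹' {0}ᶜ) :=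
    ((hΨ.continuous_deriv (by exact_mod_cast (by omega : 1 ≤ n + 1))).comp_continuousOn
      (hf.1.continuousOn.mono (Ioo_subset_Icc_self.trans hab01))).isOpen_inter_preimage
      isOpen_Ioo isOpen_compl_singleton
  obtain ⟨x, hx, hfx⟩ := hf.exists_mem_not_differentiableWithinAt hU ⟨x₁, hx₁, hΨt⟩
    (inter_subset_left.trans (Ioo_subset_Icc_self.trans hab01))
  exact ⟨x, hx.1, not_differentiableWithinAt_iteratedDerivWithin_comp (uniqueDiffOn_Icc one_pos)
    hn hΨ hf.1 (Ioo_subset_Icc_self.trans hab01 hx.1) hx.2 hfx⟩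

end Composition

section ExpSum

variable {ι : Type*} (s : Finset ι) (a μ : ι → ℝ)

noncomputable def expSum (t : ℝ) : ℝ := ∑ i ∈ s, a i * Real.exp (μ i * t)

lemma hasDerivAt_expSum (t : ℝ) :
    HasDerivAt (expSum s a μ) (expSum s (fun i => a i * μ i) μ t) t := by
  have hterm : ∀ i, HasDerivAt (fun t => a i * Real.exp (μ i * t))
      (a i * μ i * Real.exp (μ i * t)) t := fun i => by
    simpa [mul_comm, mul_left_comm, mul_assoc] using
      (((hasDerivAt_id t).const_mul (μ i)).exp.const_mul (a i))
  exact HasDerivAt.fun_sum fun i _ => hterm i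

lemma deriv_expSum : deriv (expSum s a μ) = expSum s (fun i => a i * μ i) μ :=
  funext fun t => (hasDerivAt_expSum s a μ t).deriv

lemma contDiff_expSum {n : WithTop ℕ∞} : ContDiff ℝ n (expSum s a μ) :=
  ContDiff.sum fun _ _ =>
    contDiff_const.mul (Real.contDiff_exp.comp (contDiff_const.mul contDiff_id))

lemma analyticOnNhd_expSum : AnalyticOnNhd ℝ (expSum s a μ) univ :=
  Finset.analyticOnNhd_fun_sum _ fun _ _ => analyticOnNhd_const.mul
    (analyticOnNhd_rexp.comp (analyticOnNhd_const.mul analyticOnNhd_id) (mapsTo_univ _ _))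

variable {s a μ}

/-- Dedekind's independence of characters, for the characters `t ↦ exp (μ t)` of `(ℝ, +)`. -/
lemma eq_zero_of_expSum_eq_zero (hμ : InjOn μ s) (h : expSum s a μ = 0) : ∀ i ∈ s, a i = 0 := by
  let χ : ℝ → Multiplicative ℝ →* ℝ := fun c =>
    Real.expMonoidHom.comp (AddMonoidHom.toMultiplicative (AddMonoidHom.mulLeft c))
  have hχ : ∀ c t, χ c (Multiplicative.ofAdd t) = Real.exp (c * t) := fun _ _ => rfl
  have hinj : Function.Injective fun i : s => χ (μ i) := fun i j hij =>
    Subtype.ext (hμ i.2 j.2 (by simpa [hχ] using congr($hij (Multiplicative.ofAdd 1))))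
  have hli := (linearIndependent_monoidHom (Multiplicative ℝ) ℝ).comp _ hinj
  intro i hi
  refine Fintype.linearIndependent_iff.1 hli (fun j => a j) ?_ ⟨i, hi⟩
  funext x
  simp only [Finset.sum_apply, Pi.smul_apply, smul_eq_mul, Pi.zero_apply]
  exact (Finset.sum_coe_sort s fun j => a j * Real.exp (μ j * x.toAdd)).trans (congrFun h x.toAdd)

lemma exists_mem_Ioo_expSum_ne_zero (hμ : InjOn μ s) (ha : ∃ i ∈ s, a i ≠ 0) {u v : ℝ}
    (huv : u < v) : ∃ t ∈ Ioo u v, expSum s a μ t ≠ 0 := by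
  by_contra! h
  obtain ⟨i, hi, hai⟩ := ha
  refine hai (eq_zero_of_expSum_eq_zero hμ (funext fun t => ?_) i hi)
  refine (analyticOnNhd_expSum s a μ).eqOn_zero_of_preconnected_of_eventuallyEq_zero
    isPreconnected_univ (mem_univ ((u + v) / 2)) ?_ (mem_univ t)
  filter_upwards [Ioo_mem_nhds (by linarith : u < (u + v) / 2) (by linarith : (u + v) / 2 < v)]
    using h

end ExpSum

lemma LinearIndependent.weight_injective {σ M : Type*} [AddCommGroup M] [Module ℚ M] {c : σ → M}
    (hc : LinearIndependent ℚ c) : Function.Injective (Finsupp.weight c : (σ →₀ ℕ) → M) := by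
  have hcast : ∀ d : σ →₀ ℕ,
      Finsupp.linearCombination ℚ c (d.mapRange (↑) Nat.cast_zero) = Finsupp.weight c d := by
    intro d
    rw [Finsupp.linearCombination_apply, Finsupp.sum_mapRange_index (fun i => zero_smul ℚ (c i)),
      Finsupp.weight_apply]
    simp only [Nat.cast_smul_eq_nsmul]
  intro d e hde
  have h : d.mapRange ((↑) : ℕ → ℚ) Nat.cast_zero = e.mapRange (↑) Nat.cast_zero :=
    hc (by rw [hcast, hcast, hde])
  ext i
  simpa using congr($h i)

section ExpPolynomial

variable {σ : Type*}

lemma MvPolynomial.eval_exp_mul_eq_expSum (c : σ → ℝ) (P : MvPolynomial σ ℝ) (t : ℝ) :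
    eval (fun i => Real.exp (c i * t)) P =
      expSum P.support (fun d => coeff d P) (fun d => Finsupp.weight c d) t := by
  rw [eval_eq, expSum]
  refine Finset.sum_congr rfl fun d _ => congrArg _ ?_
  simp_rw [← Real.exp_nat_mul, ← Real.exp_sum, Finsupp.weight_apply, Finsupp.sum, Finset.sum_mul]
  congr 1
  refine Finset.sum_congr rfl fun i _ => ?_
  rw [nsmul_eq_mul]
  ring

variable {c : σ → ℝ}

lemma MemEn.eval_exp_mul {n : ℕ} (hn : 1 ≤ n) {f : ℝ → ℝ} (hf : MemEn n f)
    (hmono : StrictMonoOn f (Icc 0 1)) (hc : LinearIndependent ℚ c) {P : MvPolynomial σ ℝ}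
    (hP : P ≠ 0) (hP0 : MvPolynomial.coeff 0 P = 0) :
    MemEn n fun x => MvPolynomial.eval (fun i => Real.exp (c i * f x)) P := by
  simp_rw [MvPolynomial.eval_exp_mul_eq_expSum]
  refine hf.comp (Ψ := expSum _ _ _) hn (contDiff_expSum _ _ _) (fun u v huv => ?_) hmono
  rw [deriv_expSum]
  obtain ⟨d, hd⟩ := MvPolynomial.support_nonempty.2 hP
  refine exists_mem_Ioo_expSum_ne_zero hc.weight_injective.injOn
    ⟨d, hd, mul_ne_zero (MvPolynomial.mem_support_iff.1 hd) fun hw => ?_⟩ huv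
  obtain rfl : d = 0 := hc.weight_injective (by rw [hw, map_zero])
  exact MvPolynomial.mem_support_iff.1 hd hP0

lemma exists_mem_Icc_eval_exp_mul_ne_zero {f : ℝ → ℝ} (hf : ContinuousOn f (Icc 0 1))
    (h01 : f 0 < f 1) (hc : LinearIndependent ℚ c) {P : MvPolynomial σ ℝ} (hP : P ≠ 0) :
    ∃ x ∈ Icc (0 : ℝ) 1, MvPolynomial.eval (fun i => Real.exp (c i * f x)) P ≠ 0 := by
  obtain ⟨d, hd⟩ := MvPolynomial.support_nonempty.2 hP
  obtain ⟨t, ht, hΨt⟩ := exists_mem_Ioo_expSum_ne_zero hc.weight_injective.injOn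
    ⟨d, hd, MvPolynomial.mem_support_iff.1 hd⟩ h01
  obtain ⟨x, hx, rfl⟩ := intermediate_value_Ioo zero_le_one hf ht
  exact ⟨x, Ioo_subset_Icc_self hx, by rwa [MvPolynomial.eval_exp_mul_eq_expSum]⟩

end ExpPolynomial

lemma injective_exp_mul_comp {f : ℝ → ℝ} {x y : ℝ} (hxy : f x ≠ f y) :
    Function.Injective fun (c t : ℝ) => Real.exp (c * f t) := fun c₁ c₂ h => by
  have hx := Real.exp_injective (congrFun h x)
  have hy := Real.exp_injective (congrFun h y)
  have : (c₁ - c₂) * (f x - f y) = 0 := by linear_combination hx - hy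
  exact sub_eq_zero.1 ((mul_eq_zero.1 this).resolve_right (sub_ne_zero.2 hxy))

/-- Theorem 4 of the paper. For every `n ≥ 1`, the set `E n` of
functions of class `C^n` on `[0,1]` having no derivative of order `n+1` somewhere in every
nonempty open subinterval of `[0,1]` is strongly `𝔠`-algebrable: there is a set `X` of
cardinality continuum of elements of `E n` which freely generates a subalgebra of
`ℝ^[0,1]` contained in `E n ∪ {0}`. -/
theorem En_strongly_c_algebrable (n : ℕ) (hn : 1 ≤ n) :
    ∃ X : Set (ℝ → ℝ), Cardinal.mk X = Cardinal.continuum ∧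
      (∀ f ∈ X, MemEn n f) ∧
      ∀ m : ℕ, 1 ≤ m → ∀ G : Fin m → ℝ → ℝ, (∀ i, G i ∈ X) → Function.Injective G →
        ∀ P : MvPolynomial (Fin m) ℝ, P ≠ 0 → MvPolynomial.coeff 0 P = 0 →
          MemEn n (fun x => MvPolynomial.eval (fun i => G i x) P) ∧
          ∃ x ∈ Icc (0:ℝ) 1, MvPolynomial.eval (fun i => G i x) P ≠ 0 := by
  obtain ⟨f, hf, hmono⟩ := exists_memEn_strictMonoOn n
  have h01 : f 0 < f 1 :=
    hmono (left_mem_Icc.2 zero_le_one) (right_mem_Icc.2 zero_le_one) one_pos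
  set Φ : ℝ → ℝ → ℝ := fun c x => Real.exp (c * f x)
  have hB := Module.Basis.ofVectorSpaceIndex.linearIndependent ℚ ℝ
  refine ⟨Φ '' Module.Basis.ofVectorSpaceIndex ℚ ℝ, ?_, ?_, ?_⟩
  · rw [Cardinal.mk_image_eq (injective_exp_mul_comp h01.ne), ← Real.rank_rat_real,
      ← (Module.Basis.ofVectorSpace ℚ ℝ).mk_eq_rank'']
  · rintro _ ⟨c, hc, rfl⟩
    simpa using hf.eval_exp_mul hn hmono (c := fun _ : Unit => c)
      (linearIndependent_unique_iff.2 (hB.ne_zero ⟨c, hc⟩)) (MvPolynomial.X_ne_zero ())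
      (MvPolynomial.coeff_zero_X ())
  · intro m _ G hG hGinj P hP hP0
    choose c hcB hcG using hG
    obtain rfl : G = fun i => Φ (c i) := funext fun i => (hcG i).symm
    have hc : LinearIndependent ℚ c :=
      hB.comp (fun i => ⟨c i, hcB i⟩) fun i j hij => hGinj (congrArg Φ (congrArg Subtype.val hij))
    exact ⟨hf.eval_exp_mul hn hmono hc hP hP0,
      exists_mem_Icc_eval_exp_mul_ne_zero hf.1.continuousOn h01 hc hP⟩
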